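/- The sesquilinear form ⟨a,b⟩ = Tr λ(a* b) on H_1^i, where λ is the left regular representation and * is the involution with K* = K, E* = F, F* = E, is positive semi-definite with null space equal to the nilradical of H_1^i, and ⟨e_l,e_k⟩ is a positive multiple of δ_{lk} for l,k ∈ {0,1}. -/

import Mathlib

noncomputable section


namespace Stmt9

def X (n : Fin 3) : FreeAlgebra ℂ (Fin 3) := FreeAlgebra.ι ℂ n

/-- Relations of `H_1^i`: `KE = -EK`, `KF = -FK`, `EF = FE`, `E² = 0`, `F² = 0`, `K² = 1`. -/
inductive rel : FreeAlgebra ℂ (Fin 3) → FreeAlgebra ℂ (Fin 3) → Prop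
  | ke : rel (X 0 * X 1) (-(X 1 * X 0))
  | kf : rel (X 0 * X 2) (-(X 2 * X 0))
  | ef : rel (X 1 * X 2) (X 2 * X 1)
  | e2 : rel (X 1 ^ 2) 0
  | f2 : rel (X 2 ^ 2) 0
  | k2 : rel (X 0 ^ 2) 1

/-- The algebra `H_1^i`. -/
abbrev H1 := RingQuot rel

def K : H1 := RingQuot.mkAlgHom ℂ rel (X 0)
def E : H1 := RingQuot.mkAlgHom ℂ rel (X 1)
def F : H1 := RingQuot.mkAlgHom ℂ rel (X 2)
def e0 : H1 := (2 : ℂ)⁻¹ • (1 + K)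
def e1 : H1 := (2 : ℂ)⁻¹ • (1 - K)

/-- The nilradical of `H_1^i`: span of `{e₀E, e₁E, e₀F, e₁F, e₀EF, e₁EF}`. -/
def Nrad : Submodule ℂ H1 :=
  Submodule.span ℂ
    ({e0 * E, e1 * E, e0 * F, e1 * F, e0 * (E * F), e1 * (E * F)} : Set H1)

/-- The sesquilinear form `⟨a,b⟩ = Tr λ(a* b)`, where `λ` is the left regular
representation and `st` is the `*`-operation. -/
def form (st : H1 →ₛₗ[starRingEnd ℂ] H1) (a b : H1) : ℂ :=
  LinearMap.trace ℂ H1 (LinearMap.mulLeft ℂ (st a * b))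

/-! ### Auxiliary: an explicit faithful 8-dimensional matrix model -/

abbrev M8 := Matrix (Fin 8) (Fin 8) ℤ

def MK : M8 := !![0,1,0,0,0,0,0,0; 1,0,0,0,0,0,0,0; 0,0,0,1,0,0,0,0; 0,0,1,0,0,0,0,0; 0,0,0,0,0,1,0,0; 0,0,0,0,1,0,0,0; 0,0,0,0,0,0,0,1; 0,0,0,0,0,0,1,0]
def ME : M8 := !![0,0,0,0,0,0,0,0; 0,0,0,0,0,0,0,0; 1,0,0,0,0,0,0,0; 0,-1,0,0,0,0,0,0; 0,0,0,0,0,0,0,0; 0,0,0,0,0,0,0,0; 0,0,0,0,1,0,0,0; 0,0,0,0,0,-1,0,0]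
def MF : M8 := !![0,0,0,0,0,0,0,0; 0,0,0,0,0,0,0,0; 0,0,0,0,0,0,0,0; 0,0,0,0,0,0,0,0; 1,0,0,0,0,0,0,0; 0,-1,0,0,0,0,0,0; 0,0,1,0,0,0,0,0; 0,0,0,-1,0,0,0,0]

/-- Integer matrix models of the monomial basis `1, K, E, KE, F, KF, EF, KEF`. -/
def ZP : Fin 8 → M8 := ![1, MK, ME, MK*ME, MF, MK*MF, ME*MF, MK*(ME*MF)]
/-- Integer matrix models of the `*`-images of the monomial basis. -/
def ZN : Fin 8 → M8 := ![1, MK, MF, MF*MK, ME, ME*MK, ME*MF, ME*MF*MK]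

lemma zke : MK * ME = -(ME * MK) := by decide
lemma zkf : MK * MF = -(MF * MK) := by decide
lemma zef : ME * MF = MF * ME := by decide
lemma ze2 : ME * ME = 0 := by decide
lemma zf2 : MF * MF = 0 := by decide
lemma zk2 : MK * MK = 1 := by decide
lemma zcol : ∀ j i : Fin 8, (ZP j) i 0 = if i = j then 1 else 0 := by decide
lemma zG : ∀ i j : Fin 8, Matrix.trace (ZN i * ZP j) =
    if (i = 0 ∧ j = 0) ∨ (i = 1 ∧ j = 1) then 8 else 0 := by
  decide

abbrev C8 := Matrix (Fin 8) (Fin 8) ℂ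

def cm (A : M8) : C8 := A.map (Int.castRingHom ℂ)

lemma cm_mul (A B : M8) : cm (A * B) = cm A * cm B := Matrix.map_mul

lemma cm_one : cm 1 = 1 :=
  Matrix.map_one _ (map_zero _) (map_one _)

lemma cm_neg (A : M8) : cm (-A) = -(cm A) := by
  ext i j; simp [cm]

lemma cm_zero : cm 0 = 0 := by
  ext i j; simp [cm]

lemma cm_trace (A : M8) : Matrix.trace (cm A) = ((Matrix.trace A : ℤ) : ℂ) := by
  simp [cm, Matrix.trace, Matrix.diag, Matrix.map_apply]

def f0 : FreeAlgebra ℂ (Fin 3) →ₐ[ℂ] C8 := FreeAlgebra.lift ℂ ![cm MK, cm ME, cm MF]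

lemma f0X0 : f0 (X 0) = cm MK := by simp [f0, X]
lemma f0X1 : f0 (X 1) = cm ME := by simp [f0, X]
lemma f0X2 : f0 (X 2) = cm MF := by simp [f0, X]

lemma hrel : ∀ ⦃x y⦄, rel x y → f0 x = f0 y := by
  intro x y h
  cases h <;>
    simp only [map_mul, map_neg, map_pow, map_one, map_zero, f0X0, f0X1, f0X2, sq] <;>
    rw [← cm_mul]
  · rw [zke, cm_neg, cm_mul]
  · rw [zkf, cm_neg, cm_mul]
  · rw [zef, cm_mul]
  · rw [ze2, cm_zero]
  · rw [zf2, cm_zero]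
  · rw [zk2, cm_one]

def ρ : H1 →ₐ[ℂ] C8 := RingQuot.liftAlgHom ℂ ⟨f0, hrel⟩

lemma ρK : ρ K = cm MK := by
  rw [K, ρ, RingQuot.liftAlgHom_mkAlgHom_apply, f0X0]
lemma ρE : ρ E = cm ME := by
  rw [E, ρ, RingQuot.liftAlgHom_mkAlgHom_apply, f0X1]
lemma ρF : ρ F = cm MF := by
  rw [F, ρ, RingQuot.liftAlgHom_mkAlgHom_apply, f0X2]

/-- The monomial basis of `H1`. -/
def m : Fin 8 → H1 := ![1, K, E, K*E, F, K*F, E*F, K*(E*F)]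

lemma ρm (i : Fin 8) : ρ (m i) = cm (ZP i) := by
  fin_cases i
  · show ρ 1 = cm 1
    rw [map_one, cm_one]
  · show ρ K = cm MK
    exact ρK
  · show ρ E = cm ME
    exact ρE
  · show ρ (K * E) = cm (MK * ME)
    rw [map_mul, ρK, ρE, cm_mul]
  · show ρ F = cm MF
    exact ρF
  · show ρ (K * F) = cm (MK * MF)
    rw [map_mul, ρK, ρF, cm_mul]
  · show ρ (E * F) = cm (ME * MF)
    rw [map_mul, ρE, ρF, cm_mul]
  · show ρ (K * (E * F)) = cm (MK * (ME * MF))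
    rw [map_mul, map_mul, ρK, ρE, ρF, cm_mul, cm_mul]

/-! ### Relations in `H1` -/

lemma rKK : K * K = 1 := by
  have h := RingQuot.mkAlgHom_rel ℂ rel.k2
  simpa [K, sq, map_pow, map_one] using h

lemma rKE : K * E = -(E * K) := by
  have h := RingQuot.mkAlgHom_rel ℂ rel.ke
  simpa [K, E, map_mul, map_neg] using h

lemma rKF : K * F = -(F * K) := by
  have h := RingQuot.mkAlgHom_rel ℂ rel.kf
  simpa [K, F, map_mul, map_neg] using h

lemma rFE : F * E = E * F := by
  have h := RingQuot.mkAlgHom_rel ℂ rel.ef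
  simpa [E, F, map_mul] using h.symm

lemma rEE : E * E = 0 := by
  have h := RingQuot.mkAlgHom_rel ℂ rel.e2
  simpa [E, sq, map_pow, map_zero] using h

lemma rFF : F * F = 0 := by
  have h := RingQuot.mkAlgHom_rel ℂ rel.f2
  simpa [F, sq, map_pow, map_zero] using h

lemma rEK : E * K = -(K * E) := by rw [rKE, neg_neg]
lemma rFK : F * K = -(K * F) := by rw [rKF, neg_neg]

/-- `neg_mul`, stated so that `rw` finds the right instances on `H1`. -/
lemma nm (a b : H1) : -a * b = -(a * b) := neg_mul a b

/-! ### The monomials span `H1` -/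

def Sm : Submodule ℂ H1 := Submodule.span ℂ (Set.range m)

lemma hm_mem (i : Fin 8) : m i ∈ Sm := Submodule.subset_span ⟨i, rfl⟩

lemma hm1 : (1 : H1) ∈ Sm := hm_mem 0
lemma hmK : K ∈ Sm := hm_mem 1
lemma hmE : E ∈ Sm := hm_mem 2
lemma hmKE : K * E ∈ Sm := hm_mem 3
lemma hmF : F ∈ Sm := hm_mem 4
lemma hmKF : K * F ∈ Sm := hm_mem 5
lemma hmEF : E * F ∈ Sm := hm_mem 6
lemma hmKEF : K * (E * F) ∈ Sm := hm_mem 7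

lemma mulK_m (i : Fin 8) : K * m i ∈ Sm := by
  fin_cases i
  · show K * 1 ∈ Sm
    rw [mul_one]; exact hmK
  · show K * K ∈ Sm
    rw [rKK]; exact hm1
  · exact hmKE
  · show K * (K * E) ∈ Sm
    rw [← mul_assoc, rKK, one_mul]; exact hmE
  · exact hmKF
  · show K * (K * F) ∈ Sm
    rw [← mul_assoc, rKK, one_mul]; exact hmF
  · exact hmKEF
  · show K * (K * (E * F)) ∈ Sm
    rw [← mul_assoc, rKK, one_mul]; exact hmEF

lemma mulE_m (i : Fin 8) : E * m i ∈ Sm := by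
  fin_cases i
  · show E * 1 ∈ Sm
    rw [mul_one]; exact hmE
  · show E * K ∈ Sm
    rw [rEK]; exact Sm.neg_mem hmKE
  · show E * E ∈ Sm
    rw [rEE]; exact Sm.zero_mem
  · show E * (K * E) ∈ Sm
    rw [← mul_assoc, rEK, nm, mul_assoc, rEE, mul_zero, neg_zero]; exact Sm.zero_mem
  · show E * F ∈ Sm
    exact hmEF
  · show E * (K * F) ∈ Sm
    rw [← mul_assoc, rEK, nm, mul_assoc]; exact Sm.neg_mem hmKEF
  · show E * (E * F) ∈ Sm
    rw [← mul_assoc, rEE, zero_mul]; exact Sm.zero_mem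
  · show E * (K * (E * F)) ∈ Sm
    rw [← mul_assoc, rEK, nm, mul_assoc, ← mul_assoc E E F, rEE, zero_mul, mul_zero,
      neg_zero]
    exact Sm.zero_mem

lemma mulF_m (i : Fin 8) : F * m i ∈ Sm := by
  fin_cases i
  · show F * 1 ∈ Sm
    rw [mul_one]; exact hmF
  · show F * K ∈ Sm
    rw [rFK]; exact Sm.neg_mem hmKF
  · show F * E ∈ Sm
    rw [rFE]; exact hmEF
  · show F * (K * E) ∈ Sm
    rw [← mul_assoc, rFK, nm, mul_assoc, rFE]; exact Sm.neg_mem hmKEF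
  · show F * F ∈ Sm
    rw [rFF]; exact Sm.zero_mem
  · show F * (K * F) ∈ Sm
    rw [← mul_assoc, rFK, nm, mul_assoc, rFF, mul_zero, neg_zero]; exact Sm.zero_mem
  · show F * (E * F) ∈ Sm
    rw [← mul_assoc, rFE, mul_assoc, rFF, mul_zero]; exact Sm.zero_mem
  · show F * (K * (E * F)) ∈ Sm
    rw [← mul_assoc, rFK, nm, mul_assoc, ← mul_assoc F E F, rFE, mul_assoc, rFF,
      mul_zero, mul_zero, neg_zero]
    exact Sm.zero_mem

lemma adjoin_top : Algebra.adjoin ℂ ({K, E, F} : Set H1) = ⊤ := by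
  rw [eq_top_iff]
  rintro a -
  obtain ⟨x, rfl⟩ := RingQuot.mkAlgHom_surjective ℂ rel a
  induction x using FreeAlgebra.induction with
  | grade0 r =>
    simpa using Subalgebra.algebraMap_mem (Algebra.adjoin ℂ ({K, E, F} : Set H1)) r
  | grade1 n =>
    fin_cases n
    · exact Algebra.subset_adjoin (by left; rfl)
    · exact Algebra.subset_adjoin (by right; left; rfl)
    · exact Algebra.subset_adjoin (by right; right; rfl)
  | mul a b ha hb => rw [map_mul]; exact mul_mem ha hb
  | add a b ha hb => rw [map_add]; exact add_mem ha hb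

lemma mem_Sm (a : H1) : a ∈ Sm := by
  have key : ∀ x : H1, ∀ s ∈ Sm, x * s ∈ Sm := by
    have hadj : ∀ x : H1, x ∈ Algebra.adjoin ℂ ({K, E, F} : Set H1) := by
      intro x; rw [adjoin_top]; trivial
    intro x
    refine Algebra.adjoin_induction ?_ ?_ ?_ ?_ (hadj x)
    · rintro y (rfl | rfl | rfl) <;>
      · intro s hs
        refine Submodule.span_induction ?_ ?_ ?_ ?_ hs
        · rintro z ⟨i, rfl⟩
          first
            | exact mulK_m i
            | exact mulE_m i
            | exact mulF_m i
        · rw [mul_zero]; exact Sm.zero_mem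
        · intro u v _ _ hu hv; rw [mul_add]; exact Sm.add_mem hu hv
        · intro c u _ hu; rw [mul_smul_comm]; exact Sm.smul_mem c hu
    · intro r s hs
      rw [← Algebra.smul_def]
      exact Sm.smul_mem r hs
    · intro u v _ _ hu hv s hs
      rw [add_mul]; exact Sm.add_mem (hu s hs) (hv s hs)
    · intro u v _ _ hu hv s hs
      rw [mul_assoc]; exact hu (v * s) (hv s hs)
  simpa using key a 1 hm1

/-! ### The coordinate maps -/

def ψl : H1 →ₗ[ℂ] (Fin 8 → ℂ) where
  toFun a := fun i => ρ a i 0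
  map_add' a b := by funext i; simp [map_add]
  map_smul' c a := by funext i; simp [map_smul]

lemma ψl_m (j : Fin 8) : ψl (m j) = fun i => if i = j then 1 else 0 := by
  funext i
  show ρ (m j) i 0 = _
  rw [ρm]
  simp only [cm, Matrix.map_apply, zcol j i]
  split <;> simp

lemma hrepr (a : H1) : ∑ i, ψl a i • m i = a := by
  have h : ∀ x ∈ Sm, ∑ i, ψl x i • m i = x := by
    intro x hx
    refine Submodule.span_induction ?_ ?_ ?_ ?_ hx
    · rintro z ⟨j, rfl⟩
      rw [ψl_m]
      simp [ite_smul]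
    · simp
    · intro u v _ _ hu hv
      simp only [map_add, Pi.add_apply, add_smul, Finset.sum_add_distrib, hu, hv]
    · intro c u _ hu
      simp only [map_smul, Pi.smul_apply, smul_eq_mul, mul_smul]
      rw [← Finset.smul_sum, hu]
  exact h a (mem_Sm a)

/-! ### Trace of left multiplication via the matrix model -/

def θl : (Fin 8 → ℂ) →ₗ[ℂ] H1 where
  toFun c := ∑ i, c i • m i
  map_add' c d := by simp [add_smul, Finset.sum_add_distrib]
  map_smul' r c := by simp [Finset.smul_sum, smul_smul]

lemma ψθ (c : Fin 8 → ℂ) : ψl (θl c) = c := by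
  show ψl (∑ i, c i • m i) = c
  funext j
  rw [map_sum]
  simp only [map_smul, ψl_m]
  simp [Finset.sum_apply, Finset.sum_ite_eq]

def eqv : H1 ≃ₗ[ℂ] (Fin 8 → ℂ) :=
  LinearEquiv.ofLinear ψl θl (LinearMap.ext ψθ) (LinearMap.ext hrepr)

lemma ρmj0 (j k : Fin 8) : ρ (m j) k 0 = if k = j then 1 else 0 := by
  have h := congrFun (ψl_m j) k
  exact h

lemma trace_mulLeft (x : H1) :
    LinearMap.trace ℂ H1 (LinearMap.mulLeft ℂ x) = Matrix.trace (ρ x) := by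
  rw [← LinearMap.trace_conj' (LinearMap.mulLeft ℂ x) eqv]
  rw [LinearMap.trace_eq_matrix_trace ℂ (Pi.basisFun ℂ (Fin 8))]
  rw [LinearMap.toMatrix_eq_toMatrix']
  have hmat : LinearMap.toMatrix' (eqv.conj (LinearMap.mulLeft ℂ x)) = ρ x := by
    ext i j
    rw [LinearMap.toMatrix'_apply, LinearEquiv.conj_apply_apply]
    have hsymm : eqv.symm (fun j' => if j' = j then (1:ℂ) else 0) = m j := by
      show ∑ i, (if i = j then (1:ℂ) else 0) • m i = m j
      simp [ite_smul]
    have hps : (Pi.single j (1:ℂ) : Fin 8 → ℂ) = fun j' => if j' = j then 1 else 0 := by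
      funext j'; simp [Pi.single_apply]
    rw [hps, hsymm]
    show ρ (x * m j) i 0 = ρ x i j
    rw [map_mul, Matrix.mul_apply]
    simp only [ρmj0, mul_ite, mul_one, mul_zero]
    simp [Finset.sum_ite_eq]
  rw [hmat]

/-! ### Values of the form on monomials -/

section withStar

variable (st : H1 →ₛₗ[starRingEnd ℂ] H1)
  (hmul : ∀ x y : H1, st (x * y) = st y * st x)
  (hK : st K = K) (hE : st E = F) (hF : st F = E)

include hmul hK in
lemma st_one : st 1 = 1 := by
  have h := hmul K K
  rw [rKK] at h
  rw [h, hK, rKK]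

include hmul hK hE hF in
lemma ρ_stm (i : Fin 8) : ρ (st (m i)) = cm (ZN i) := by
  have h1 := st_one st hmul hK
  fin_cases i
  · show ρ (st 1) = cm 1
    rw [h1, map_one, cm_one]
  · show ρ (st K) = cm MK
    rw [hK, ρK]
  · show ρ (st E) = cm MF
    rw [hE, ρF]
  · show ρ (st (K * E)) = cm (MF * MK)
    rw [hmul, hK, hE, map_mul, ρF, ρK, cm_mul]
  · show ρ (st F) = cm ME
    rw [hF, ρE]
  · show ρ (st (K * F)) = cm (ME * MK)
    rw [hmul, hK, hF, map_mul, ρE, ρK, cm_mul]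
  · show ρ (st (E * F)) = cm (ME * MF)
    rw [hmul, hE, hF, map_mul, ρE, ρF, cm_mul]
  · show ρ (st (K * (E * F))) = cm (ME * MF * MK)
    rw [hmul, hmul, hK, hE, hF, map_mul, map_mul, ρE, ρF, ρK, cm_mul, cm_mul]

include hmul hK hE hF in
lemma hG (i j : Fin 8) :
    Matrix.trace (ρ (st (m i) * m j)) =
      if (i = 0 ∧ j = 0) ∨ (i = 1 ∧ j = 1) then 8 else 0 := by
  rw [map_mul, ρ_stm st hmul hK hE hF, ρm, ← cm_mul, cm_trace, zG]
  split <;> norm_num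

include hmul hK hE hF in
lemma form_formula (a b : H1) :
    form st a b = 8 * ((starRingEnd ℂ) (ψl a 0) * ψl b 0 +
      (starRingEnd ℂ) (ψl a 1) * ψl b 1) := by
  rw [form, trace_mulLeft]
  have hsta : st a * b =
      ∑ i, (starRingEnd ℂ) (ψl a i) • ∑ j, ψl b j • (st (m i) * m j) := by
    conv_lhs => rw [← hrepr a, ← hrepr b]
    rw [map_sum, Finset.sum_mul]
    refine Finset.sum_congr rfl fun i _ => ?_
    rw [LinearMap.map_smulₛₗ, smul_mul_assoc, Finset.mul_sum]
    congr 1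
    refine Finset.sum_congr rfl fun j _ => ?_
    rw [mul_smul_comm]
  rw [hsta, map_sum, Matrix.trace_sum]
  have hterm : ∀ i : Fin 8, Matrix.trace (ρ ((starRingEnd ℂ) (ψl a i) •
      ∑ j, ψl b j • (st (m i) * m j))) =
      (starRingEnd ℂ) (ψl a i) * ∑ j, ψl b j *
        (if (i = 0 ∧ j = 0) ∨ (i = 1 ∧ j = 1) then (8:ℂ) else 0) := by
    intro i
    rw [map_smul, Matrix.trace_smul, map_sum, Matrix.trace_sum, smul_eq_mul]
    congr 1
    refine Finset.sum_congr rfl fun j _ => ?_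
    rw [map_smul, Matrix.trace_smul, smul_eq_mul, hG st hmul hK hE hF]
  rw [Finset.sum_congr rfl fun i _ => hterm i]
  rw [Fin.sum_univ_eight]
  simp only [Fin.sum_univ_eight]
  simp (config := { decide := true }) only [if_true, if_false]
  norm_num
  ring

end withStar

/-! ### Coordinates of distinguished elements -/

lemma ψl_one : ψl (1 : H1) = fun i => if i = 0 then 1 else 0 := ψl_m 0
lemma ψl_K : ψl K = fun i => if i = 1 then 1 else 0 := ψl_m 1
lemma ψl_E : ψl E = fun i => if i = 2 then 1 else 0 := ψl_m 2
lemma ψl_KE : ψl (K * E) = fun i => if i = 3 then 1 else 0 := ψl_m 3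
lemma ψl_F : ψl F = fun i => if i = 4 then 1 else 0 := ψl_m 4
lemma ψl_KF : ψl (K * F) = fun i => if i = 5 then 1 else 0 := ψl_m 5
lemma ψl_EF : ψl (E * F) = fun i => if i = 6 then 1 else 0 := ψl_m 6
lemma ψl_KEF : ψl (K * (E * F)) = fun i => if i = 7 then 1 else 0 := ψl_m 7

lemma ψl_e0 (i : Fin 8) :
    ψl e0 i = (2:ℂ)⁻¹ * ((if i = 0 then 1 else 0) + (if i = 1 then 1 else 0)) := by
  rw [e0, map_smul, map_add, ψl_one, ψl_K]
  simp

lemma ψl_e1 (i : Fin 8) :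
    ψl e1 i = (2:ℂ)⁻¹ * ((if i = 0 then 1 else 0) - (if i = 1 then 1 else 0)) := by
  rw [e1, map_smul, map_sub, ψl_one, ψl_K]
  simp

/-! ### Nilradical facts -/

lemma he0E : e0 * E = (2:ℂ)⁻¹ • (E + K * E) := by
  rw [e0, smul_mul_assoc, add_mul, one_mul]
lemma he1E : e1 * E = (2:ℂ)⁻¹ • (E - K * E) := by
  rw [e1, smul_mul_assoc, sub_mul, one_mul]
lemma he0F : e0 * F = (2:ℂ)⁻¹ • (F + K * F) := by
  rw [e0, smul_mul_assoc, add_mul, one_mul]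
lemma he1F : e1 * F = (2:ℂ)⁻¹ • (F - K * F) := by
  rw [e1, smul_mul_assoc, sub_mul, one_mul]
lemma he0EF : e0 * (E * F) = (2:ℂ)⁻¹ • (E * F + K * (E * F)) := by
  rw [e0, smul_mul_assoc, add_mul, one_mul]
lemma he1EF : e1 * (E * F) = (2:ℂ)⁻¹ • (E * F - K * (E * F)) := by
  rw [e1, smul_mul_assoc, sub_mul, one_mul]

lemma pair_sum (x : H1) : e0 * x + e1 * x = x := by
  rw [e0, e1, smul_mul_assoc, smul_mul_assoc, add_mul, sub_mul, one_mul]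
  module

lemma pair_diff (x : H1) : e0 * x - e1 * x = K * x := by
  rw [e0, e1, smul_mul_assoc, smul_mul_assoc, add_mul, sub_mul, one_mul]
  module

lemma hE_nrad : E ∈ Nrad := by
  rw [← pair_sum E]
  exact Nrad.add_mem
    (Submodule.subset_span (by simp [Set.mem_insert_iff]))
    (Submodule.subset_span (by simp [Set.mem_insert_iff]))

lemma hKE_nrad : K * E ∈ Nrad := by
  rw [← pair_diff E]
  exact Nrad.sub_mem
    (Submodule.subset_span (by simp [Set.mem_insert_iff]))
    (Submodule.subset_span (by simp [Set.mem_insert_iff]))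

lemma hF_nrad : F ∈ Nrad := by
  rw [← pair_sum F]
  exact Nrad.add_mem
    (Submodule.subset_span (by simp [Set.mem_insert_iff]))
    (Submodule.subset_span (by simp [Set.mem_insert_iff]))

lemma hKF_nrad : K * F ∈ Nrad := by
  rw [← pair_diff F]
  exact Nrad.sub_mem
    (Submodule.subset_span (by simp [Set.mem_insert_iff]))
    (Submodule.subset_span (by simp [Set.mem_insert_iff]))

lemma hEF_nrad : E * F ∈ Nrad := by
  rw [← pair_sum (E * F)]
  exact Nrad.add_mem
    (Submodule.subset_span (by simp [Set.mem_insert_iff]))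
    (Submodule.subset_span (by simp [Set.mem_insert_iff]))

lemma hKEF_nrad : K * (E * F) ∈ Nrad := by
  rw [← pair_diff (E * F)]
  exact Nrad.sub_mem
    (Submodule.subset_span (by simp [Set.mem_insert_iff]))
    (Submodule.subset_span (by simp [Set.mem_insert_iff]))

lemma nrad_coords {x : H1} (hx : x ∈ Nrad) : ψl x 0 = 0 ∧ ψl x 1 = 0 := by
  refine Submodule.span_induction ?_ ?_ ?_ ?_ hx
  · intro z hz
    simp only [Set.mem_insert_iff, Set.mem_singleton_iff] at hz
    rcases hz with rfl | rfl | rfl | rfl | rfl | rfl <;>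
      constructor <;>
      · first
          | rw [he0E] | rw [he1E] | rw [he0F] | rw [he1F] | rw [he0EF] | rw [he1EF]
        rw [map_smul]
        simp only [map_add, map_sub, ψl_E, ψl_KE, ψl_F, ψl_KF, ψl_EF, ψl_KEF]
        simp
  · simp
  · intro u v _ _ hu hv
    constructor <;> simp [map_add, hu.1, hu.2, hv.1, hv.2]
  · intro c u _ hu
    constructor <;> simp [map_smul, hu.1, hu.2]

/-- Given the `*`-operation of `H_1^i` (conjugate-linear, antimultiplicative, with
`K* = K`, `E* = F`, `F* = E`), the form `⟨a,b⟩ = Tr λ(a* b)` is positive semi-definite,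
its null space is the nilradical, and `⟨e_l, e_k⟩` is a positive multiple of `δ_{lk}`. -/
theorem form_positive_semidefinite (st : H1 →ₛₗ[starRingEnd ℂ] H1)
    (hmul : ∀ x y : H1, st (x * y) = st y * st x)
    (hK : st K = K) (hE : st E = F) (hF : st F = E) :
    (∀ a : H1, 0 ≤ (form st a a).re ∧ (form st a a).im = 0) ∧
    (∀ a : H1, (∀ b : H1, form st a b = 0) ↔ a ∈ Nrad) ∧
    (∃ c : ℝ, 0 < c ∧ ∀ l k : Fin 2,
      form st (![e0, e1] l) (![e0, e1] k) = if l = k then (c : ℂ) else 0) := by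
  have hff := form_formula st hmul hK hE hF
  have hconj : (starRingEnd ℂ) ((2:ℂ)⁻¹) = 2⁻¹ := by simp [map_ofNat]
  refine ⟨?_, ?_, ?_⟩
  · intro a
    have h2 : form st a a =
        ((8 * (Complex.normSq (ψl a 0) + Complex.normSq (ψl a 1)) : ℝ) : ℂ) := by
      rw [hff a a, ← Complex.normSq_eq_conj_mul_self, ← Complex.normSq_eq_conj_mul_self]
      push_cast
      ring
    constructor
    · rw [h2, Complex.ofReal_re]
      have h3 := Complex.normSq_nonneg (ψl a 0)
      have h4 := Complex.normSq_nonneg (ψl a 1)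
      linarith
    · rw [h2]
      exact Complex.ofReal_im _
  · intro a
    constructor
    · intro h
      have h0 : ψl a 0 = 0 := by
        have h1' := h 1
        rw [hff a 1, ψl_one] at h1'
        simp (config := { decide := true }) only [] at h1'
        simpa using h1'
      have h1 : ψl a 1 = 0 := by
        have h1' := h K
        rw [hff a K, ψl_K] at h1'
        simp (config := { decide := true }) only [] at h1'
        simpa using h1'
      have ha : a = ∑ i, ψl a i • m i := (hrepr a).symm
      rw [ha, Fin.sum_univ_eight, h0, h1, zero_smul, zero_smul, zero_add, zero_add]
      refine Nrad.add_mem (Nrad.add_mem (Nrad.add_mem (Nrad.add_mem (Nrad.add_mem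
        (Nrad.smul_mem _ ?_) (Nrad.smul_mem _ ?_)) (Nrad.smul_mem _ ?_))
        (Nrad.smul_mem _ ?_)) (Nrad.smul_mem _ ?_)) (Nrad.smul_mem _ ?_)
      · exact hE_nrad
      · exact hKE_nrad
      · exact hF_nrad
      · exact hKF_nrad
      · exact hEF_nrad
      · exact hKEF_nrad
    · intro ha b
      obtain ⟨h0, h1⟩ := nrad_coords ha
      rw [hff a b, h0, h1]
      simp
  · have c00 : ψl e0 0 = 2⁻¹ := by
      rw [ψl_e0]; norm_num
    have c01 : ψl e0 1 = 2⁻¹ := by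
      rw [ψl_e0]
      rw [if_neg (by decide), if_pos rfl]
      norm_num
    have c10 : ψl e1 0 = 2⁻¹ := by
      rw [ψl_e1]
      rw [if_pos rfl, if_neg (by decide)]
      norm_num
    have c11 : ψl e1 1 = -2⁻¹ := by
      rw [ψl_e1]
      rw [if_neg (by decide), if_pos rfl]
      norm_num
    refine ⟨4, by norm_num, ?_⟩
    intro l k
    fin_cases l <;> fin_cases k <;>
      simp only [Matrix.cons_val_zero, Matrix.cons_val_one, Matrix.head_cons, Fin.mk_zero,
        Fin.mk_one] <;>
      rw [hff] <;>
      simp only [c00, c01, c10, c11, hconj, map_neg] <;>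
      norm_num [Fin.ext_iff]

end Stmt9
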